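/- arXiv:1411.1314 — 3 statements merged into one kernel-verified Lean document; each statement's English description precedes it below -/
import Mathlib

section
/- With notation as in the Cholesky change of variables, the orthant probability satisfies F(a,b,Σ) = ∫ ∏_{i=1}^d Φ(B_i(η_{<i})) φ(η_i | B_i(η_{<i})) dη_{1:d}, where φ(· | A) = φ(x)1_A(x)/Φ(A) is the density of a standard normal truncated to the interval A, and Φ(A) denotes the standard normal probability of A (assumed positive almost everywhere along the recursion). -/
open MeasureTheory Real Finset Matrix

/-- standard normal density -/
noncomputable def stdnorm (x : ℝ) : ℝ := (Real.sqrt (2 * Real.pi))⁻¹ * Real.exp (-x ^ 2 / 2)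

theorem orthant_truncated_decomposition
    (d : ℕ) (S Γ : Matrix (Fin d) (Fin d) ℝ)
    (hpos : S.PosDef) (hchol : S = Γ * Γ.transpose)
    (hlow : ∀ i j : Fin d, i < j → Γ i j = 0)
    (hdiag : ∀ i : Fin d, 0 < Γ i i)
    (a b : Fin d → ℝ) (hab : ∀ i, a i ≤ b i)
    -- probability of each truncation interval, as a function of the previous coordinates
    (Φint : (Fin d → ℝ) → Fin d → ℝ)
    (hΦint : ∀ η i, Φint η i =
      ∫ x in Set.Icc ((a i - ∑ j ∈ Finset.Iio i, Γ i j * η j) / Γ i i)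
                     ((b i - ∑ j ∈ Finset.Iio i, Γ i j * η j) / Γ i i), stdnorm x)
    (hΦpos : ∀ η i, 0 < Φint η i) :
    (∫ y in Set.Icc a b,
        (2 * Real.pi) ^ (-(d : ℝ) / 2) * S.det ^ (-(1 : ℝ) / 2) *
          Real.exp (-(1 / 2) * (y ⬝ᵥ (S⁻¹).mulVec y)))
      = ∫ η : Fin d → ℝ, ∏ i : Fin d,
          Φint η i *
            (stdnorm (η i) *
              (if (a i - ∑ j ∈ Finset.Iio i, Γ i j * η j) / Γ i i ≤ η i ∧
                  η i ≤ (b i - ∑ j ∈ Finset.Iio i, Γ i j * η j) / Γ i i then (1 : ℝ) else 0)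
              / Φint η i) := by
  classical
  have h2π : (0:ℝ) < 2 * Real.pi := by positivity
  -- determinant facts
  have hΓtri : Γ.BlockTriangular OrderDual.toDual := by
    intro i j h
    exact hlow i j h
  have hΓdet : Γ.det = ∏ i, Γ i i := Matrix.det_of_lowerTriangular Γ hΓtri
  have hdet_pos : 0 < Γ.det := by
    rw [hΓdet]; exact Finset.prod_pos fun i _ => hdiag i
  have hunit : IsUnit Γ.det := hdet_pos.ne'.isUnit
  have hSdet : S.det = Γ.det ^ 2 := by
    rw [hchol, Matrix.det_mul, Matrix.det_transpose, sq]
  -- quadratic form identity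
  have hquad : ∀ η : Fin d → ℝ, (Γ *ᵥ η) ⬝ᵥ (S⁻¹) *ᵥ (Γ *ᵥ η) = η ⬝ᵥ η := by
    intro η
    have h2 : S⁻¹ * Γ = Γᵀ⁻¹ := by
      rw [hchol, Matrix.mul_inv_rev, Matrix.mul_assoc,
        Matrix.nonsing_inv_mul _ hunit, Matrix.mul_one]
    rw [Matrix.mulVec_mulVec, h2, dotProduct_mulVec, ← Matrix.vecMul_transpose,
      Matrix.vecMul_vecMul, Matrix.mul_nonsing_inv _ (by rwa [Matrix.det_transpose]),
      Matrix.vecMul_one]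
  -- mulVec formula from lower-triangularity
  have hmv : ∀ (η : Fin d → ℝ) (i : Fin d),
      (Γ *ᵥ η) i = Γ i i * η i + ∑ j ∈ Finset.Iio i, Γ i j * η j := by
    intro η i
    have h1 : (Γ *ᵥ η) i = ∑ j ∈ Finset.Iic i, Γ i j * η j := by
      show (∑ j, Γ i j * η j) = _
      refine (Finset.sum_subset (Finset.subset_univ _) ?_).symm
      intro j _ hj
      rw [hlow i j (by simpa using hj), zero_mul]
    rw [h1, ← Finset.Iio_insert, Finset.sum_insert (by simp)]
  -- condition equivalence
  have hcond : ∀ (η : Fin d → ℝ) (i : Fin d),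
      ((a i - ∑ j ∈ Finset.Iio i, Γ i j * η j) / Γ i i ≤ η i ∧
        η i ≤ (b i - ∑ j ∈ Finset.Iio i, Γ i j * η j) / Γ i i) ↔
      (a i ≤ (Γ *ᵥ η) i ∧ (Γ *ᵥ η) i ≤ b i) := by
    intro η i
    rw [hmv, div_le_iff₀ (hdiag i), le_div_iff₀ (hdiag i)]
    constructor <;> rintro ⟨h1, h2⟩ <;> constructor <;> nlinarith
  -- the common integrand
  set c : ℝ := (Real.sqrt (2 * Real.pi))⁻¹ with hc
  set h : (Fin d → ℝ) → ℝ := fun η =>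
    if Γ *ᵥ η ∈ Set.Icc a b then c ^ d * Real.exp (-(1/2) * (η ⬝ᵥ η)) else 0 with hh
  -- Gaussian product
  have hgauss : ∀ η : Fin d → ℝ,
      (∏ i, stdnorm (η i)) = c ^ d * Real.exp (-(1/2) * (η ⬝ᵥ η)) := by
    intro η
    simp only [stdnorm]
    rw [Finset.prod_mul_distrib, Finset.prod_const, ← Real.exp_sum]
    congr 1
    · rw [Finset.card_univ, Fintype.card_fin, hc]
    · rw [dotProduct, Finset.mul_sum]
      exact congrArg Real.exp (Finset.sum_congr rfl fun i _ => by ring)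
  -- RHS equals the integral of h
  have hRHS : ∀ η : Fin d → ℝ,
      (∏ i : Fin d,
          Φint η i *
            (stdnorm (η i) *
              (if (a i - ∑ j ∈ Finset.Iio i, Γ i j * η j) / Γ i i ≤ η i ∧
                  η i ≤ (b i - ∑ j ∈ Finset.Iio i, Γ i j * η j) / Γ i i then (1 : ℝ) else 0)
              / Φint η i)) = h η := by
    intro η
    have h1 : ∀ i : Fin d,
        Φint η i *
          (stdnorm (η i) *
            (if (a i - ∑ j ∈ Finset.Iio i, Γ i j * η j) / Γ i i ≤ η i ∧
                η i ≤ (b i - ∑ j ∈ Finset.Iio i, Γ i j * η j) / Γ i i then (1 : ℝ) else 0)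
            / Φint η i)
        = stdnorm (η i) *
            (if (a i - ∑ j ∈ Finset.Iio i, Γ i j * η j) / Γ i i ≤ η i ∧
                η i ≤ (b i - ∑ j ∈ Finset.Iio i, Γ i j * η j) / Γ i i then (1 : ℝ) else 0) := by
      intro i
      rw [mul_comm, div_mul_cancel₀ _ (hΦpos η i).ne']
    rw [Finset.prod_congr rfl fun i _ => h1 i, Finset.prod_mul_distrib, Finset.prod_boole]
    have hiff : (∀ i ∈ (Finset.univ : Finset (Fin d)),
        (a i - ∑ j ∈ Finset.Iio i, Γ i j * η j) / Γ i i ≤ η i ∧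
          η i ≤ (b i - ∑ j ∈ Finset.Iio i, Γ i j * η j) / Γ i i) ↔ Γ *ᵥ η ∈ Set.Icc a b := by
      simp only [Set.mem_Icc, Pi.le_def]
      constructor
      · intro hP
        exact ⟨fun i => ((hcond η i).1 (hP i (Finset.mem_univ i))).1,
          fun i => ((hcond η i).1 (hP i (Finset.mem_univ i))).2⟩
      · intro hP i _
        exact (hcond η i).2 ⟨hP.1 i, hP.2 i⟩
    simp only [hiff, hh]
    rw [mul_ite, mul_one, mul_zero]
    split_ifs with hmem
    · exact hgauss η
    · rfl
  -- the constant identity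
  have hconst : Γ.det * ((2 * Real.pi) ^ (-(d : ℝ) / 2) * S.det ^ (-(1:ℝ) / 2)) = c ^ d := by
    have e1 : (2 * Real.pi : ℝ) ^ (-(d : ℝ) / 2) = c ^ d := by
      rw [hc, ← Real.rpow_natCast ((Real.sqrt (2 * Real.pi))⁻¹) d, Real.sqrt_eq_rpow,
        ← Real.rpow_neg h2π.le, ← Real.rpow_mul h2π.le]
      congr 1
      ring
    have e2 : S.det ^ (-(1:ℝ) / 2) = Γ.det⁻¹ := by
      rw [hSdet, ← Real.rpow_natCast Γ.det 2, ← Real.rpow_mul hdet_pos.le,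
        show ((2:ℕ) : ℝ) * (-(1:ℝ)/2) = -1 by norm_num, Real.rpow_neg_one]
    rw [e1, e2]
    field_simp
  -- the LHS density function
  set f : (Fin d → ℝ) → ℝ := fun y =>
    (2 * Real.pi) ^ (-(d : ℝ) / 2) * S.det ^ (-(1:ℝ) / 2) *
      Real.exp (-(1 / 2) * (y ⬝ᵥ (S⁻¹) *ᵥ y)) with hf
  have hfc : Continuous f := by
    have hq : Continuous fun y : Fin d → ℝ => y ⬝ᵥ (S⁻¹) *ᵥ y := by
      simp only [dotProduct, Matrix.mulVec]
      exact continuous_finset_sum _ fun i _ => (continuous_apply i).mul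
        (continuous_finset_sum _ fun j _ => continuous_const.mul (continuous_apply j))
    exact continuous_const.mul (Real.continuous_exp.comp (continuous_const.mul hq))
  -- change of variables
  have hdetL : LinearMap.det (Matrix.toLin' Γ) = Γ.det := LinearMap.det_toLin' Γ
  have hmap : Measure.map (Matrix.toLin' Γ) volume
      = ENNReal.ofReal |Γ.det⁻¹| • (volume : Measure (Fin d → ℝ)) := by
    have := Real.map_linearMap_volume_pi_eq_smul_volume_pi
      (f := Matrix.toLin' Γ) (by rw [hdetL]; exact hdet_pos.ne')
    rwa [hdetL] at this
  set g : (Fin d → ℝ) → ℝ := Set.indicator (Set.Icc a b) f with hg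
  have hgm : Measurable g := hfc.measurable.indicator measurableSet_Icc
  have hCoV : (∫ y, g y) = Γ.det * ∫ η, g ((Matrix.toLin' Γ) η) := by
    rw [← MeasureTheory.integral_map
      ((Matrix.toLin' Γ).continuous_of_finiteDimensional.measurable.aemeasurable)
      hgm.aestronglyMeasurable, hmap, MeasureTheory.integral_smul_measure,
      ENNReal.toReal_ofReal (abs_nonneg _), abs_of_pos (inv_pos.2 hdet_pos), smul_eq_mul,
      ← mul_assoc, mul_inv_cancel₀ hdet_pos.ne', one_mul]
  have hLHS : ∀ η : Fin d → ℝ, Γ.det * g ((Matrix.toLin' Γ) η) = h η := by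
    intro η
    rw [hg, Matrix.toLin'_apply, Set.indicator_apply]
    simp only [hh]
    split_ifs with hmem
    · rw [hf]
      simp only
      rw [hquad η, ← mul_assoc, hconst]
    · rw [mul_zero]
  calc (∫ y in Set.Icc a b, f y) = ∫ y, g y := (MeasureTheory.integral_indicator measurableSet_Icc).symm
    _ = Γ.det * ∫ η, g ((Matrix.toLin' Γ) η) := hCoV
    _ = ∫ η, Γ.det * g ((Matrix.toLin' Γ) η) := (MeasureTheory.integral_const_mul _ _).symm
    _ = ∫ η, h η := by exact congrArg _ (funext hLHS)
    _ = _ := by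
      refine (congrArg _ (funext fun η => ?_)).symm
      exact hRHS η
end

section
/- The GHK estimator is unbiased: if η^1,…,η^d are generated sequentially with η_i ∼ φ(·|B_i(η_{<i})) (standard normal truncated to B_i(η_{<i})), then E[∏_{i=1}^d Φ(B_i(η_{<i}))] = F(a,b,Σ), the Gaussian orthant probability. -/
open MeasureTheory Real Finset Matrix

lemma ghk_gauss_prod (d : ℕ) (η : Fin d → ℝ) :
    ∏ i, stdnorm (η i) = (2*Real.pi)^(-(d:ℝ)/2) * Real.exp (-(1/2) * (η ⬝ᵥ η)) := by
  unfold stdnorm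
  rw [Finset.prod_mul_distrib, Finset.prod_const, ← Real.exp_sum]
  have h2π : (0:ℝ) < 2*Real.pi := by positivity
  congr 1
  · rw [Finset.card_univ, Fintype.card_fin, Real.sqrt_eq_rpow,
      ← Real.rpow_neg_one ((2*Real.pi) ^ ((1:ℝ)/2)), ← Real.rpow_mul h2π.le,
      ← Real.rpow_natCast ((2*Real.pi) ^ ((1:ℝ)/2 * -1)) d, ← Real.rpow_mul h2π.le]
    congr 1
    ring
  · congr 1
    rw [dotProduct, Finset.mul_sum]
    exact Finset.sum_congr rfl fun i _ => by ring

/-- The GHK estimator is unbiased: the expectation, under the sequential sampling density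
`∏ i φ(η i | B i (η_{<i}))`, of the product of weights `∏ i Φ(B i (η_{<i}))`, equals
the Gaussian orthant probability `F(a, b, Σ)`. -/
theorem ghk_unbiased
    (d : ℕ) (S Γ : Matrix (Fin d) (Fin d) ℝ)
    (hpos : S.PosDef) (hchol : S = Γ * Γ.transpose)
    (hlow : ∀ i j : Fin d, i < j → Γ i j = 0)
    (hdiag : ∀ i : Fin d, 0 < Γ i i)
    (a b : Fin d → ℝ) (hab : ∀ i, a i ≤ b i)
    (Φint : (Fin d → ℝ) → Fin d → ℝ)
    (hΦint : ∀ η i, Φint η i =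
      ∫ x in Set.Icc ((a i - ∑ j ∈ Finset.Iio i, Γ i j * η j) / Γ i i)
                     ((b i - ∑ j ∈ Finset.Iio i, Γ i j * η j) / Γ i i), stdnorm x)
    (hΦpos : ∀ η i, 0 < Φint η i) :
    (∫ η : Fin d → ℝ,
        (∏ i : Fin d, Φint η i) *
          ∏ i : Fin d,
            (stdnorm (η i) *
              (if (a i - ∑ j ∈ Finset.Iio i, Γ i j * η j) / Γ i i ≤ η i ∧
                  η i ≤ (b i - ∑ j ∈ Finset.Iio i, Γ i j * η j) / Γ i i then (1 : ℝ) else 0)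
              / Φint η i))
      = ∫ y in Set.Icc a b,
          (2 * Real.pi) ^ (-(d : ℝ) / 2) * S.det ^ (-(1 : ℝ) / 2) *
            Real.exp (-(1 / 2) * (y ⬝ᵥ (S⁻¹).mulVec y)) := by
  classical
  -- determinant facts
  have hdetΓ : Γ.det = ∏ i, Γ i i := by
    apply Matrix.det_of_lowerTriangular
    intro i j hij
    exact hlow i j hij
  have hdetpos : 0 < Γ.det := hdetΓ ▸ Finset.prod_pos fun i _ => hdiag i
  have hdet0 : Γ.det ≠ 0 := ne_of_gt hdetpos
  have hSdet : S.det = Γ.det ^ 2 := by rw [hchol, Matrix.det_mul, Matrix.det_transpose, sq]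
  have hSdetpow : S.det ^ (-(1:ℝ)/2) = Γ.det⁻¹ := by
    rw [hSdet, ← Real.rpow_natCast Γ.det 2, ← Real.rpow_mul hdetpos.le]
    norm_num
    exact Real.rpow_neg_one _
  -- quadratic form identity
  have hGt0 : Γ.transpose.det ≠ 0 := by rwa [Matrix.det_transpose]
  have hquad : ∀ η : Fin d → ℝ,
      (Γ.mulVec η) ⬝ᵥ (S⁻¹).mulVec (Γ.mulVec η) = η ⬝ᵥ η := by
    intro η
    have h1 : (S⁻¹).mulVec (Γ.mulVec η) = (Γ.transpose)⁻¹.mulVec η := by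
      rw [hchol, Matrix.mul_inv_rev, Matrix.mulVec_mulVec,
        Matrix.mul_assoc, Matrix.nonsing_inv_mul Γ (isUnit_iff_ne_zero.mpr hdet0),
        Matrix.mul_one]
    rw [h1, dotProduct_mulVec]
    have h2 : (Γ.mulVec η) ᵥ* Γᵀ⁻¹ = η := by
      rw [← Matrix.vecMul_transpose, Matrix.vecMul_vecMul,
        Matrix.mul_nonsing_inv _ (isUnit_iff_ne_zero.mpr hGt0), Matrix.vecMul_one]
    rw [h2]
  -- mulVec coordinatewise expansion
  have hmv : ∀ (η : Fin d → ℝ) (i : Fin d),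
      Γ.mulVec η i = (∑ j ∈ Finset.Iio i, Γ i j * η j) + Γ i i * η i := by
    intro η i
    have h1 : Γ.mulVec η i = ∑ j ∈ Finset.Iic i, Γ i j * η j := by
      rw [Matrix.mulVec, dotProduct]
      exact (Finset.sum_subset (Finset.subset_univ _) (fun j _ hj => by
        rw [hlow i j (by simpa using hj), zero_mul])).symm
    rw [h1, ← Finset.Iio_insert, Finset.sum_insert (by simp)]
    ring
  -- condition equivalence, coordinatewise
  have hci : ∀ (η : Fin d → ℝ) (i : Fin d),
      ((a i - ∑ j ∈ Finset.Iio i, Γ i j * η j) / Γ i i ≤ η i ∧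
        η i ≤ (b i - ∑ j ∈ Finset.Iio i, Γ i j * η j) / Γ i i) ↔
      (a i ≤ Γ.mulVec η i ∧ Γ.mulVec η i ≤ b i) := by
    intro η i
    rw [hmv η i, div_le_iff₀ (hdiag i), le_div_iff₀ (hdiag i)]
    constructor <;> rintro ⟨h1, h2⟩ <;> constructor <;> nlinarith [h1, h2]
  have hmem : ∀ η : Fin d → ℝ,
      (Γ.mulVec η ∈ Set.Icc a b) ↔ ∀ i, a i ≤ Γ.mulVec η i ∧ Γ.mulVec η i ≤ b i := by
    intro η
    simp [Set.mem_Icc, Pi.le_def, forall_and]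
  -- pointwise identity for the integrand
  set F : (Fin d → ℝ) → ℝ := Set.indicator (Set.Icc a b)
    (fun y => (2 * Real.pi) ^ (-(d : ℝ) / 2) * S.det ^ (-(1 : ℝ) / 2) *
      Real.exp (-(1 / 2) * (y ⬝ᵥ (S⁻¹).mulVec y))) with hF
  have hpoint : ∀ η : Fin d → ℝ,
      (∏ i : Fin d, Φint η i) *
          ∏ i : Fin d,
            (stdnorm (η i) *
              (if (a i - ∑ j ∈ Finset.Iio i, Γ i j * η j) / Γ i i ≤ η i ∧
                  η i ≤ (b i - ∑ j ∈ Finset.Iio i, Γ i j * η j) / Γ i i then (1 : ℝ) else 0)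
              / Φint η i)
        = Γ.det * F (Matrix.toLin' Γ η) := by
    intro η
    have hne : (∏ i : Fin d, Φint η i) ≠ 0 :=
      Finset.prod_ne_zero_iff.mpr fun i _ => (hΦpos η i).ne'
    rw [Finset.prod_div_distrib, Finset.prod_mul_distrib, Finset.prod_boole, mul_comm,
      div_mul_cancel₀ _ hne, Matrix.toLin'_apply]
    by_cases hm : Γ.mulVec η ∈ Set.Icc a b
    · rw [if_pos, hF, Set.indicator_of_mem hm, hquad η, ghk_gauss_prod, mul_one]
      · rw [hSdetpow]
        field_simp
      · intro i
        simp only [Finset.mem_univ, forall_true_left]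
        exact (hci η i).mpr ((hmem η).mp hm i)
    · rw [if_neg, hF, Set.indicator_of_notMem hm, mul_zero, mul_zero]
      intro hc
      exact hm ((hmem η).mpr fun i => (hci η i).mp (hc i (Finset.mem_univ i)))
  -- measurability
  have hcontQ : Continuous fun y : Fin d → ℝ => y ⬝ᵥ (S⁻¹).mulVec y := by
    simp only [dotProduct, Matrix.mulVec]
    exact continuous_finset_sum _ fun i _ => (continuous_apply i).mul
      (continuous_finset_sum _ fun j _ => continuous_const.mul (continuous_apply j))
  have hFmeas : Measurable F := by
    apply Measurable.indicator _ measurableSet_Icc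
    exact (continuous_const.mul (Real.continuous_exp.comp (continuous_const.mul hcontQ))).measurable
  have hTmeas : Measurable (Matrix.toLin' Γ) :=
    (LinearMap.continuous_on_pi _).measurable
  have hmap : Measure.map (Matrix.toLin' Γ) volume
      = ENNReal.ofReal |Γ.det⁻¹| • volume :=
    Real.map_matrix_volume_pi_eq_smul_volume_pi hdet0
  calc (∫ η : Fin d → ℝ,
        (∏ i : Fin d, Φint η i) *
          ∏ i : Fin d,
            (stdnorm (η i) *
              (if (a i - ∑ j ∈ Finset.Iio i, Γ i j * η j) / Γ i i ≤ η i ∧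
                  η i ≤ (b i - ∑ j ∈ Finset.Iio i, Γ i j * η j) / Γ i i then (1 : ℝ) else 0)
              / Φint η i))
      = ∫ η : Fin d → ℝ, Γ.det * F (Matrix.toLin' Γ η) := by
        exact integral_congr_ae (Filter.Eventually.of_forall hpoint)
    _ = Γ.det * ∫ η : Fin d → ℝ, F (Matrix.toLin' Γ η) := by
        simp_rw [← smul_eq_mul]
        rw [integral_smul]
    _ = Γ.det * ∫ y, F y ∂(Measure.map (Matrix.toLin' Γ) volume) := by
        rw [integral_map hTmeas.aemeasurable hFmeas.aestronglyMeasurable]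
    _ = Γ.det * ((ENNReal.ofReal |Γ.det⁻¹|).toReal * ∫ y, F y) := by
        rw [hmap, integral_smul_measure, smul_eq_mul]
    _ = ∫ y, F y := by
        rw [ENNReal.toReal_ofReal (abs_nonneg _), abs_of_pos (inv_pos.mpr hdetpos),
          ← mul_assoc, mul_inv_cancel₀ hdet0, one_mul]
    _ = _ := integral_indicator measurableSet_Icc
end

section
/- The systematic resampling offspring counts satisfy ⌊nW_j⌋ ≤ N_j ≤ ⌈nW_j⌉ almost surely, and ∑_j N_j = n almost surely. -/
open MeasureTheory Finset

/-- offspring count of particle `j` in systematic resampling with uniform draw `u`: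
`N_j = ⌈C_j − u⌉ − ⌈C_{j−1} − u⌉` with `C_j = n ∑_{i ≤ j} W_i`. -/
noncomputable def sysCount (n : ℕ) (W : Fin n → ℝ) (j : Fin n) (u : ℝ) : ℤ :=
  ⌈(n : ℝ) * ∑ i ∈ Finset.Iic j, W i - u⌉ - ⌈(n : ℝ) * ∑ i ∈ Finset.Iio j, W i - u⌉

lemma ceil_sub_ceil_bounds (x a : ℝ) :
    ⌊x⌋ ≤ ⌈x + a⌉ - ⌈a⌉ ∧ ⌈x + a⌉ - ⌈a⌉ ≤ ⌈x⌉ := by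
  constructor
  · have h1 : (⌊x⌋ : ℝ) + a ≤ x + a := by
      have := Int.floor_le x; linarith
    have := Int.ceil_le_ceil h1
    rw [add_comm ((⌊x⌋:ℝ)) a, Int.ceil_add_intCast] at this
    omega
  · have := Int.ceil_add_le x a
    omega

/-- Systematic resampling offspring counts satisfy `⌊nW_j⌋ ≤ N_j ≤ ⌈nW_j⌉` and `∑_j N_j = n`. -/
theorem systematic_resampling_counts
    (n : ℕ) (hn : 0 < n) (W : Fin n → ℝ) (hWnn : ∀ i, 0 ≤ W i)
    (hWsum : ∑ i, W i = 1) (u : ℝ) (hu : u ∈ Set.Icc (0 : ℝ) 1) :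
    (∀ j, ⌊(n : ℝ) * W j⌋ ≤ sysCount n W j u ∧ sysCount n W j u ≤ ⌈(n : ℝ) * W j⌉) ∧
    (∑ j, sysCount n W j u) = n := by
  have hsplit : ∀ j : Fin n, ∑ i ∈ Finset.Iic j, W i = W j + ∑ i ∈ Finset.Iio j, W i := by
    intro j
    rw [← Finset.Iio_insert, Finset.sum_insert (by simp)]
  constructor
  · intro j
    have key := ceil_sub_ceil_bounds ((n : ℝ) * W j) ((n : ℝ) * ∑ i ∈ Finset.Iio j, W i - u)
    have heq : (n : ℝ) * W j + ((n : ℝ) * ∑ i ∈ Finset.Iio j, W i - u)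
        = (n : ℝ) * ∑ i ∈ Finset.Iic j, W i - u := by
      rw [hsplit j]; ring
    rw [heq] at key
    exact key
  · set F : ℕ → ℤ := fun k =>
      ⌈(n : ℝ) * ∑ i ∈ Finset.univ.filter (fun i : Fin n => (i : ℕ) < k), W i - u⌉ with hF
    have hterm : ∀ j : Fin n, sysCount n W j u = F (j.val + 1) - F j.val := by
      intro j
      have h1 : Finset.Iic j = Finset.univ.filter (fun i : Fin n => (i : ℕ) < j.val + 1) := by
        ext i; simp only [Finset.mem_Iic, Finset.mem_filter, Finset.mem_univ, true_and, Fin.le_def, Nat.lt_succ_iff]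
      have h2 : Finset.Iio j = Finset.univ.filter (fun i : Fin n => (i : ℕ) < j.val) := by
        ext i; simp only [Finset.mem_Iio, Finset.mem_filter, Finset.mem_univ, true_and, Fin.lt_def]
      simp [sysCount, h1, h2, hF]
    rw [Finset.sum_congr rfl (fun j _ => hterm j), Fin.sum_univ_eq_sum_range (fun k => F (k+1) - F k) n,
      Finset.sum_range_sub F]
    have hFn : F n = n + ⌈-u⌉ := by
      have hall : Finset.univ.filter (fun i : Fin n => (i : ℕ) < n) = Finset.univ := by
        ext i; simp [i.isLt]
      simp only [hF, hall, hWsum, mul_one]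
      rw [show (n : ℝ) - u = -u + (n : ℤ) by push_cast; ring, Int.ceil_add_intCast]
      ring
    have hF0 : F 0 = ⌈-u⌉ := by simp [hF]
    rw [hFn, hF0]; ring
end
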